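/- Let A be a Banach algebra and 1 < p < ∞. Then the projective tensor product ℓ^p ⊗̂ A is Arens regular if and only if A is Arens regular, where ℓ^p carries pointwise multiplication. -/

import Mathlib

open ContinuousLinearMap NormedSpace Filter Topology Metric

noncomputable section

namespace NormedSpace

variable (𝕜 : Type*) [NontriviallyNormedField 𝕜] (E : Type*) [SeminormedAddCommGroup E]
  [NormedSpace 𝕜 E]

/-- The topological dual of a seminormed space `E` (the former Mathlib `NormedSpace.Dual`). -/
abbrev Dual : Type _ := E →L[𝕜] 𝕜

end NormedSpace

namespace Arens

section Bilinear

variable {X Y Z : Type*} [NormedAddCommGroup X] [NormedSpace ℂ X]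
  [NormedAddCommGroup Y] [NormedSpace ℂ Y] [NormedAddCommGroup Z] [NormedSpace ℂ Z]

/-- The Arens adjoint `m*` of a bounded bilinear map `m : X × Y → Z`,
`⟨m*(z',x), y⟩ = ⟨z', m(x,y)⟩`. -/
def adj (f : X →L[ℂ] Y →L[ℂ] Z) : Dual ℂ Z →L[ℂ] X →L[ℂ] Dual ℂ Y :=
  ((ContinuousLinearMap.compL ℂ X (Y →L[ℂ] Z) (Y →L[ℂ] ℂ)).flip f).comp
    (ContinuousLinearMap.compL ℂ Y Z ℂ)

@[simp] lemma adj_apply (f : X →L[ℂ] Y →L[ℂ] Z) (z' : Dual ℂ Z) (x : X) (y : Y) :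
    adj f z' x y = z' (f x y) := rfl

/-- The Arens triple-adjoint extension `m*** : X** × Y** → Z**` of a bounded
bilinear map `m : X × Y → Z`. -/
def ext3 (f : X →L[ℂ] Y →L[ℂ] Z) :
    Dual ℂ (Dual ℂ X) →L[ℂ] Dual ℂ (Dual ℂ Y) →L[ℂ] Dual ℂ (Dual ℂ Z) :=
  adj (adj (adj f))

/-- Weak-star convergence of a net `(a i)` of `X` (canonically embedded in `X**`)
to an element `F` of the bidual `X**`. -/
def WStarTendsto {ι : Type*} (a : ι → X) (l : Filter ι) (F : Dual ℂ (Dual ℂ X)) : Prop :=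
  ∀ x' : Dual ℂ X, Tendsto (fun i => x' (a i)) l (𝓝 (F x'))

end Bilinear

section Algebra

variable (A : Type*) [NonUnitalNormedRing A] [NormedSpace ℂ A]
  [IsScalarTower ℂ A A] [SMulCommClass ℂ A A]

/-- The multiplication of a (non-unital) Banach algebra as a bounded bilinear map. -/
abbrev mulCLM : A →L[ℂ] A →L[ℂ] A := ContinuousLinearMap.mul ℂ A

/-- The first Arens product on the bidual `A**`. -/
def fstArens (F G : Dual ℂ (Dual ℂ A)) : Dual ℂ (Dual ℂ A) := ext3 (mulCLM A) F G

/-- The second Arens product on the bidual `A**` (`m^{t***t}`). -/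
def sndArens (F G : Dual ℂ (Dual ℂ A)) : Dual ℂ (Dual ℂ A) :=
  ext3 ((mulCLM A).flip) G F

/-- A Banach algebra is Arens regular when its two Arens products coincide. -/
def ArensRegular : Prop := ∀ F G : Dual ℂ (Dual ℂ A), fstArens A F G = sndArens A F G

end Algebra

section ModuleWC

universe u
variable {A : Type u} {B : Type*} [NonUnitalNormedRing A] [NormedSpace ℂ A]
  [NormedAddCommGroup B] [NormedSpace ℂ B]

/-- For a left Banach `A`-module action `πl` on `B`, the element `b' a ∈ B*`,
`⟨b' a, b⟩ = ⟨b', a • b⟩`. -/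
def dualSmulL (πl : A →L[ℂ] B →L[ℂ] B) (b' : Dual ℂ B) (a : A) : Dual ℂ B := adj πl b' a

/-- The Arens extension `b' a'' ∈ B***`, `⟨b'', b' a''⟩ = ⟨π_ℓ***(a'', b''), b'⟩`. -/
def dualSmulLStar (πl : A →L[ℂ] B →L[ℂ] B) (b' : Dual ℂ B) (F : Dual ℂ (Dual ℂ A)) :
    Dual ℂ (Dual ℂ (Dual ℂ B)) :=
  (inclusionInDoubleDual ℂ (Dual ℂ B) b').comp (ext3 πl F)

/-- `b' ∈ B*` has the left-weak*-weak convergence property (`Lw*wc`) with respect to `A`: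
for every net `(a_α) ⊆ A` with `a_α → a''` weak* in `A**`, the net `b' a_α` converges
weakly to `b' a''` in `B*`. -/
def LWStarWC (πl : A →L[ℂ] B →L[ℂ] B) (b' : Dual ℂ B) : Prop :=
  ∀ (ι : Type u) (l : Filter ι) (a : ι → A) (F : Dual ℂ (Dual ℂ A)),
    WStarTendsto a l F →
    ∀ b'' : Dual ℂ (Dual ℂ B),
      Tendsto (fun i => b'' (dualSmulL πl b' (a i))) l (𝓝 (dualSmulLStar πl b' F b''))

/-- For a right Banach `A`-module action `πr` on `B`, the element `a b' ∈ B*`,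
`⟨a b', b⟩ = ⟨b', b • a⟩`. -/
def dualSmulR (πr : B →L[ℂ] A →L[ℂ] B) (a : A) (b' : Dual ℂ B) : Dual ℂ B :=
  adj πr.flip b' a

/-- The Arens extension `a'' b' ∈ B***`, `⟨b'', a'' b'⟩ = ⟨π_r^{t***}(a'', b''), b'⟩`. -/
def dualSmulRStar (πr : B →L[ℂ] A →L[ℂ] B) (F : Dual ℂ (Dual ℂ A)) (b' : Dual ℂ B) :
    Dual ℂ (Dual ℂ (Dual ℂ B)) :=
  (inclusionInDoubleDual ℂ (Dual ℂ B) b').comp (ext3 πr.flip F)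

/-- `b' ∈ B*` has the right-weak*-weak convergence property (`Rw*wc`) with respect to `A`. -/
def RWStarWC (πr : B →L[ℂ] A →L[ℂ] B) (b' : Dual ℂ B) : Prop :=
  ∀ (ι : Type u) (l : Filter ι) (a : ι → A) (F : Dual ℂ (Dual ℂ A)),
    WStarTendsto a l F →
    ∀ b'' : Dual ℂ (Dual ℂ B),
      Tendsto (fun i => b'' (dualSmulR πr (a i) b')) l (𝓝 (dualSmulRStar πr F b' b''))

end ModuleWC

section AlgebraWC

variable (A : Type u) [NonUnitalNormedRing A] [NormedSpace ℂ A]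
  [IsScalarTower ℂ A A] [SMulCommClass ℂ A A]

/-- The product `a'' a' ∈ A*` (first step of the first Arens product):
`⟨a'' a', a⟩ = ⟨a'', a' a⟩` where `⟨a' a, b⟩ = ⟨a', a b⟩`. -/
def biSmul (F : Dual ℂ (Dual ℂ A)) (a' : Dual ℂ A) : Dual ℂ A :=
  F.comp (adj (mulCLM A) a')

/-- The element `a · a' ∈ A*`, `⟨a a', b⟩ = ⟨a', b a⟩`. -/
def leftMulDual (a : A) (a' : Dual ℂ A) : Dual ℂ A := a'.comp ((mulCLM A).flip a)

/-- `A*` has the `Rw*wc`-property with respect to `A`: for every `a' ∈ A*` and every net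
`(a_α) ⊆ A` with `a_α → a''` weak* in `A**`, the net `a_α a'` (`⟨a_α a', b⟩ = ⟨a', b a_α⟩`)
converges weakly in `A*` to `a'' a'`. -/
def RWStarWCDualProp : Prop :=
  ∀ (a' : Dual ℂ A) (ι : Type u) (l : Filter ι) (a : ι → A) (F : Dual ℂ (Dual ℂ A)),
    WStarTendsto a l F →
    ∀ x'' : Dual ℂ (Dual ℂ A),
      Tendsto (fun i => x'' (leftMulDual A (a i) a')) l (𝓝 (x'' (biSmul A F a')))

/-- `A*` has the `Lw*wc`-property with respect to `A`. -/
def LWStarWCDualProp : Prop := ∀ a' : Dual ℂ A, LWStarWC (mulCLM A) a'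

/-- `A**` has the `Lw*wc`-property with respect to `A`: for every `x'' ∈ A**` and every net
`(a_α) ⊆ A` with `a_α → a''` weak* in `A**`, the net `x'' a_α` converges weakly in `A**`
to `x'' a''`. -/
def LWStarWCBidualProp : Prop :=
  ∀ (x'' : Dual ℂ (Dual ℂ A)) (ι : Type u) (l : Filter ι) (a : ι → A) (F : Dual ℂ (Dual ℂ A)),
    WStarTendsto a l F →
    ∀ Φ : Dual ℂ (Dual ℂ (Dual ℂ A)),
      Tendsto (fun i => Φ (fstArens A x'' (inclusionInDoubleDual ℂ A (a i)))) l
        (𝓝 (Φ (fstArens A x'' F)))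

/-- `D : A → A*` is a derivation: `D(ab) = a·D(b) + D(a)·b`, where
`(a·f)(x) = f(x a)` and `(f·b)(x) = f(b x)`. -/
def IsDerivation (D : A →L[ℂ] Dual ℂ A) : Prop :=
  ∀ a b : A, D (a * b) = (D b).comp ((mulCLM A).flip a) + (D a).comp (mulCLM A b)

/-- `A` is weakly amenable: every bounded derivation `D : A → A*` is inner. -/
def WeaklyAmenable : Prop :=
  ∀ D : A →L[ℂ] Dual ℂ A, IsDerivation A D →
    ∃ f : Dual ℂ A, ∀ a : A, D a = f.comp ((mulCLM A).flip a) - f.comp (mulCLM A a)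

/-- The left action of `A**` (with the first Arens product) on `A***`:
`(F·Φ)(G) = Φ(G F)`. -/
def ddLeftAct (F : Dual ℂ (Dual ℂ A)) (Φ : Dual ℂ (Dual ℂ (Dual ℂ A))) :
    Dual ℂ (Dual ℂ (Dual ℂ A)) :=
  Φ.comp ((ext3 (mulCLM A)).flip F)

/-- The right action of `A**` (with the first Arens product) on `A***`:
`(Φ·F)(G) = Φ(F G)`. -/
def ddRightAct (F : Dual ℂ (Dual ℂ A)) (Φ : Dual ℂ (Dual ℂ (Dual ℂ A))) :
    Dual ℂ (Dual ℂ (Dual ℂ A)) :=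
  Φ.comp (ext3 (mulCLM A) F)

/-- A bounded map `D : A** → A***` is a derivation for the first Arens product. -/
def IsDerivationDD (D : Dual ℂ (Dual ℂ A) →L[ℂ] Dual ℂ (Dual ℂ (Dual ℂ A))) : Prop :=
  ∀ F G : Dual ℂ (Dual ℂ A),
    D (fstArens A F G) = ddLeftAct A F (D G) + ddRightAct A G (D F)

/-- `A**` (with the first Arens product) is weakly amenable. -/
def WeaklyAmenableDD : Prop :=
  ∀ D : Dual ℂ (Dual ℂ A) →L[ℂ] Dual ℂ (Dual ℂ (Dual ℂ A)), IsDerivationDD A D →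
    ∃ Φ : Dual ℂ (Dual ℂ (Dual ℂ A)), ∀ F, D F = ddLeftAct A F Φ - ddRightAct A F Φ

/-- `A*** A** ⊆ A*`: each product `x''' x''` (`⟨x''' x'', a''⟩ = ⟨x''', x'' a''⟩`)
lies in the canonical image of `A*` in `A***`. -/
def TripleDualMulIntoDual : Prop :=
  ∀ (Φ : Dual ℂ (Dual ℂ (Dual ℂ A))) (F : Dual ℂ (Dual ℂ A)),
    ∃ a' : Dual ℂ A, ddRightAct A F Φ = inclusionInDoubleDual ℂ (Dual ℂ A) a'

end AlgebraWC

section DualMap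

variable {X Y : Type*} [NormedAddCommGroup X] [NormedSpace ℂ X]
  [NormedAddCommGroup Y] [NormedSpace ℂ Y]

/-- The Banach-space adjoint of a bounded operator. -/
def dualMap' (T : X →L[ℂ] Y) : Dual ℂ Y →L[ℂ] Dual ℂ X :=
  (ContinuousLinearMap.compL ℂ X Y ℂ).flip T

/-- The second adjoint `D'' : A** → A***` of `D : A → A*`. -/
def secondAdjoint {A : Type*} [NonUnitalNormedRing A] [NormedSpace ℂ A]
    (D : A →L[ℂ] Dual ℂ A) :
    Dual ℂ (Dual ℂ A) →L[ℂ] Dual ℂ (Dual ℂ (Dual ℂ A)) :=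
  dualMap' (dualMap' D)

end DualMap

section Biregular

variable (A B : Type*) [NonUnitalNormedRing A] [NormedSpace ℂ A]
  [NonUnitalNormedRing B] [NormedSpace ℂ B]

/-- A bounded bilinear form `m : A × B → ℂ` is biregular (Ülger): for any sequences
`(a_i), (aa2_j)` in the unit ball of `A` and `(b_i), (bb_j)` in the unit ball of `B`,
the two iterated limits of `m(a_i aa2_j, b_i bb_j)` coincide whenever both exist. -/
def Biregular (m : A →L[ℂ] B →L[ℂ] ℂ) : Prop :=
  ∀ (a aa2 : ℕ → A) (b bb : ℕ → B),
    (∀ i, ‖a i‖ ≤ 1) → (∀ j, ‖aa2 j‖ ≤ 1) → (∀ i, ‖b i‖ ≤ 1) → (∀ j, ‖bb j‖ ≤ 1) →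
    ∀ (g h : ℕ → ℂ) (L L' : ℂ),
      (∀ i, Tendsto (fun j => m (a i * aa2 j) (b i * bb j)) atTop (𝓝 (g i))) →
      Tendsto g atTop (𝓝 L) →
      (∀ j, Tendsto (fun i => m (a i * aa2 j) (b i * bb j)) atTop (𝓝 (h j))) →
      Tendsto h atTop (𝓝 L') → L = L'

/-- Arens regularity of the projective tensor product `A ⊗̂ B`.  By Ülger's theorem
(`[22, Theorem 3.4]`), `A ⊗̂ B` is Arens regular if and only if every bounded bilinear
form `m : A × B → ℂ` is biregular; since the dual of `A ⊗̂ B` is exactly the space of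
bounded bilinear forms on `A × B`, we take this equivalent characterization as the
formalization of Arens regularity of `A ⊗̂ B`. -/
def ProjArensRegular : Prop := ∀ m : A →L[ℂ] B →L[ℂ] ℂ, Biregular A B m

end Biregular

end Arens

namespace Arens

section lpAlgebra

open scoped ENNReal

variable (p : ℝ≥0∞) [Fact (1 ≤ p)]

lemma lp_norm_mul_pointwise (h2 : p ≠ ∞)
    (f g : lp (fun _ : ℕ => ℂ) p) (i : ℕ) :
    ‖f i * g i‖ ^ p.toReal ≤ ‖f i‖ ^ p.toReal * ‖g‖ ^ p.toReal := by
  have hp0 : p ≠ 0 := (zero_lt_one.trans_le (Fact.out (p := 1 ≤ p))).ne'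
  have hpt : 0 < p.toReal := ENNReal.toReal_pos hp0 h2
  have h3 : ‖f i * g i‖ ≤ ‖f i‖ * ‖g‖ := by
    rw [norm_mul]
    exact mul_le_mul_of_nonneg_left (lp.norm_apply_le_norm hp0 g i) (norm_nonneg _)
  calc ‖f i * g i‖ ^ p.toReal ≤ (‖f i‖ * ‖g‖) ^ p.toReal :=
        Real.rpow_le_rpow (norm_nonneg _) h3 hpt.le
    _ = ‖f i‖ ^ p.toReal * ‖g‖ ^ p.toReal :=
        Real.mul_rpow (norm_nonneg _) (norm_nonneg _)

lemma memℓp_mul (h2 : p ≠ ∞) (f g : lp (fun _ : ℕ => ℂ) p) :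
    Memℓp (⇑f * ⇑g) p := by
  have hp0 : p ≠ 0 := (zero_lt_one.trans_le (Fact.out (p := 1 ≤ p))).ne'
  have hpt : 0 < p.toReal := ENNReal.toReal_pos hp0 h2
  apply memℓp_gen
  have hs : Summable fun i => ‖f i‖ ^ p.toReal * ‖g‖ ^ p.toReal :=
    ((lp.memℓp f).summable hpt).mul_right _
  refine hs.of_nonneg_of_le (fun i => Real.rpow_nonneg (norm_nonneg _) _) fun i => ?_
  exact lp_norm_mul_pointwise p h2 f g i

/-- Pointwise multiplication on `ℓᵖ` (`1 ≤ p < ∞`). -/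
@[reducible]
def lpMul (h2 : p ≠ ∞) : Mul (lp (fun _ : ℕ => ℂ) p) :=
  ⟨fun f g => ⟨⇑f * ⇑g, memℓp_mul p h2 f g⟩⟩

/-- Pointwise multiplication makes `ℓᵖ` (`1 ≤ p < ∞`) a non-unital ring. -/
@[reducible]
def lpNonUnitalRing (h2 : p ≠ ∞) : NonUnitalRing (lp (fun _ : ℕ => ℂ) p) :=
  letI : Mul (lp (fun _ : ℕ => ℂ) p) := lpMul p h2
  Function.Injective.nonUnitalRing (fun f : lp (fun _ : ℕ => ℂ) p => (f : ∀ _ : ℕ, ℂ))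
    Subtype.coe_injective (lp.coeFn_zero _ p) lp.coeFn_add (fun _ _ => rfl) lp.coeFn_neg
    lp.coeFn_sub (fun _ _ => rfl) (fun _ _ => rfl)

lemma lp_norm_mul_le (h2 : p ≠ ∞) :
    ∀ f g : lp (fun _ : ℕ => ℂ) p,
      letI : Mul (lp (fun _ : ℕ => ℂ) p) := lpMul p h2
      ‖f * g‖ ≤ ‖f‖ * ‖g‖ := by
  intro f g
  have hp0 : p ≠ 0 := (zero_lt_one.trans_le (Fact.out (p := 1 ≤ p))).ne'
  have hpt : 0 < p.toReal := ENNReal.toReal_pos hp0 h2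
  letI : Mul (lp (fun _ : ℕ => ℂ) p) := lpMul p h2
  refine lp.norm_le_of_tsum_le hpt (mul_nonneg (norm_nonneg f) (norm_nonneg g)) ?_
  have hfg : Summable fun i => ‖f i‖ ^ p.toReal * ‖g‖ ^ p.toReal :=
    ((lp.memℓp f).summable hpt).mul_right _
  have hle : ∀ i : ℕ, ‖(f * g) i‖ ^ p.toReal ≤ ‖f i‖ ^ p.toReal * ‖g‖ ^ p.toReal :=
    fun i => lp_norm_mul_pointwise p h2 f g i
  calc (∑' i : ℕ, ‖(f * g) i‖ ^ p.toReal)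
      ≤ ∑' i : ℕ, ‖f i‖ ^ p.toReal * ‖g‖ ^ p.toReal :=
        Summable.tsum_le_tsum hle ((lp.memℓp (f * g)).summable hpt) hfg
    _ = (∑' i : ℕ, ‖f i‖ ^ p.toReal) * ‖g‖ ^ p.toReal := tsum_mul_right
    _ = ‖f‖ ^ p.toReal * ‖g‖ ^ p.toReal := by rw [← lp.norm_rpow_eq_tsum hpt f]
    _ = (‖f‖ * ‖g‖) ^ p.toReal :=
        (Real.mul_rpow (norm_nonneg _) (norm_nonneg _)).symm

/-- `ℓᵖ` (`1 ≤ p < ∞`) with pointwise multiplication is a (non-unital) Banach algebra. -/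
@[reducible]
def lpNonUnitalNormedRing (h2 : p ≠ ∞) :
    NonUnitalNormedRing (lp (fun _ : ℕ => ℂ) p) :=
  letI : Mul (lp (fun _ : ℕ => ℂ) p) := lpMul p h2
  letI R : NonUnitalRing (lp (fun _ : ℕ => ℂ) p) := lpNonUnitalRing p h2
  { lp.normedAddCommGroup, R with
    norm_mul_le := fun f g => lp_norm_mul_le p h2 f g }

end lpAlgebra

end Arens

/-!
Both directions run through the double-limit (biregularity) description of Arens regularity of
`ℓᵖ ⊗̂ A`. If every bounded bilinear form on `ℓᵖ × A` is biregular, use `m(u, a) = u₀ φ(a)`: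
Helly's lemma yields sequences `xᵢ, yⱼ` in the unit ball of `A` with `φ(xᵢ yⱼ)` equal to
`⟨F □ G, φ⟩` for `i ≤ j` and to `⟨F ◇ G, φ⟩` for `j < i`, so the two iterated limits are the two
Arens products. Conversely, pass to subsequences of the `ℓᵖ`-sequences converging coordinatewise
to `α` and `β`; multiplication by a fixed element of `ℓᵖ` turns coordinatewise convergence of a
bounded sequence into norm convergence (dominated convergence). With `F`, `G` weak-* cluster
points of the `A`-sequences along an ultrafilter, the two iterated limits become
`⟨F □ G, m(αβ)⟩` and `⟨F ◇ G, m(αβ)⟩`, which agree when `A` is Arens regular.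
-/

open scoped ENNReal

namespace Arens

section Helly

variable {𝕜 E : Type*} [RCLike 𝕜] [NormedAddCommGroup E] [NormedSpace 𝕜 E]

theorem exists_forall_mem_apply_eq (s : Finset (Dual 𝕜 E)) (F : Dual 𝕜 (Dual 𝕜 E)) :
    ∃ x : E, ∀ f ∈ s, f x = F f := by
  classical
  let T : E →ₗ[𝕜] s → 𝕜 := LinearMap.pi fun f => (f.1 : E →ₗ[𝕜] 𝕜)
  suffices (fun f : s => F f) ∈ LinearMap.range T by
    obtain ⟨x, hx⟩ := this
    exact ⟨x, fun f hf => congr_fun hx ⟨f, hf⟩⟩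
  by_contra hv
  obtain ⟨c, hcv, hTc⟩ := Submodule.exists_le_ker_of_notMem hv
  have hsum : ∑ f : s, c (fun g => if f = g then 1 else 0) • f.1 = 0 := by
    ext x
    have := hTc (LinearMap.mem_range_self T x)
    rw [LinearMap.mem_ker, LinearMap.pi_apply_eq_sum_univ c] at this
    simpa [T, mul_comm] using this
  apply hcv
  rw [LinearMap.pi_apply_eq_sum_univ c]
  simpa [mul_comm] using congr(F $hsum)

theorem apply_eq_of_iInf_ker_le_ker {s : Finset (Dual 𝕜 E)} {F : Dual 𝕜 (Dual 𝕜 E)} {x : E}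
    (hx : ∀ f ∈ s, f x = F f) {g : Dual 𝕜 E}
    (hg : ⨅ f : s, LinearMap.ker (f.1 : E →ₗ[𝕜] 𝕜) ≤ LinearMap.ker (g : E →ₗ[𝕜] 𝕜)) :
    F g = g x := by
  obtain ⟨c, hc⟩ := (Submodule.mem_span_range_iff_exists_fun 𝕜).1 <|
    mem_span_of_iInf_ker_le_ker (L := fun f : s => (f.1 : E →ₗ[𝕜] 𝕜)) (K := g) hg
  have hgc : g = ∑ f : s, c f • f.1 := by
    ext y
    simpa using (LinearMap.congr_fun hc y).symm
  simp [hgc, hx]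

/-- Helly's lemma. -/
theorem exists_norm_lt_forall_mem_apply_eq (s : Finset (Dual 𝕜 E)) (F : Dual 𝕜 (Dual 𝕜 E))
    {ε : ℝ} (hε : 0 < ε) : ∃ x : E, ‖x‖ < ‖F‖ + ε ∧ ∀ f ∈ s, f x = F f := by
  obtain ⟨x₀, hx₀⟩ := exists_forall_mem_apply_eq s F
  let K : Submodule 𝕜 E := ⨅ f : s, LinearMap.ker (f.1 : E →ₗ[𝕜] 𝕜)
  have hquot : ‖K.mkQ x₀‖ ≤ ‖F‖ := by
    obtain ⟨g, hg, hgx⟩ := exists_dual_vector'' 𝕜 (K.mkQ x₀)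
    have hgK : ‖g.comp K.mkQL‖ ≤ 1 :=
      (g.opNorm_comp_le _).trans <| mul_le_one₀ hg (norm_nonneg _) <|
        K.mkQL.opNorm_le_bound zero_le_one fun y => by
          simpa using Submodule.Quotient.norm_mk_le K y
    have hker : K ≤ LinearMap.ker (g.comp K.mkQL : E →ₗ[𝕜] 𝕜) := fun y hy => by
      simp [(Submodule.Quotient.mk_eq_zero K).2 hy]
    have := apply_eq_of_iInf_ker_le_ker hx₀ hker
    calc ‖K.mkQ x₀‖ = ‖g (K.mkQ x₀)‖ := by rw [hgx, RCLike.norm_ofReal, abs_norm]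
      _ = ‖F (g.comp K.mkQL)‖ := by rw [this]; rfl
      _ ≤ ‖F‖ * ‖g.comp K.mkQL‖ := F.le_opNorm _
      _ ≤ ‖F‖ := mul_le_of_le_one_right (norm_nonneg F) hgK
  obtain ⟨x, hxK, hx⟩ := Submodule.Quotient.norm_mk_lt (K.mkQ x₀) hε
  refine ⟨x, hx.trans_le (by gcongr), fun f hf => ?_⟩
  have : x - x₀ ∈ K := (Submodule.Quotient.eq K).1 hxK
  have hf0 : f (x - x₀) = 0 := (Submodule.mem_iInf _).1 this ⟨f, hf⟩
  rw [map_sub, sub_eq_zero] at hf0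
  rw [hf0, hx₀ f hf]

end Helly

section Bilinear

variable {X Y Z : Type*} [NormedAddCommGroup X] [NormedSpace ℂ X]
  [NormedAddCommGroup Y] [NormedSpace ℂ Y] [NormedAddCommGroup Z] [NormedSpace ℂ Z]

theorem exists_seq_apply_eq_ext3 (μ : X →L[ℂ] Y →L[ℂ] Z) {F : Dual ℂ (Dual ℂ X)}
    {G : Dual ℂ (Dual ℂ Y)} (hF : ‖F‖ < 1) (hG : ‖G‖ < 1) (φ : Dual ℂ Z) :
    ∃ (x : ℕ → X) (y : ℕ → Y), (∀ i, ‖x i‖ ≤ 1) ∧ (∀ j, ‖y j‖ ≤ 1) ∧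
      (∀ i j, i ≤ j → φ (μ (x i) (y j)) = ext3 μ F G φ) ∧
      (∀ i j, j < i → φ (μ (x i) (y j)) = ext3 μ.flip G F φ) := by
  classical
  set ψ := adj (adj μ) G φ
  set χ := adj (adj μ.flip) F φ
  -- each new pair comes from Helly's lemma, applied to the functionals attached to earlier pairs
  obtain ⟨xy, hP, hr⟩ := exists_seq_of_forall_finset_exists
    (fun q : X × Y => ‖q.1‖ ≤ 1 ∧ ‖q.2‖ ≤ 1 ∧ ψ q.1 = F ψ ∧ χ q.2 = G χ ∧ φ (μ q.1 q.2) = ψ q.1)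
    (fun q q' => φ (μ q'.1 q.2) = χ q.2 ∧ φ (μ q.1 q'.2) = ψ q.1) fun s _ => by
      obtain ⟨x, hx, hxs⟩ := exists_norm_lt_forall_mem_apply_eq
        (insert ψ (s.image fun q => adj μ.flip φ q.2)) F (sub_pos.2 hF)
      obtain ⟨y, hy, hys⟩ := exists_norm_lt_forall_mem_apply_eq
        (insert χ (insert (adj μ φ x) (s.image fun q => adj μ φ q.1))) G (sub_pos.2 hG)
      refine ⟨(x, y), ⟨by linarith, by linarith, hxs ψ (by simp), hys χ (by simp),
        hys (adj μ φ x) (by simp)⟩, fun q hq => ⟨?_, ?_⟩⟩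
      · exact hxs (adj μ.flip φ q.2) (Finset.mem_insert_of_mem (Finset.mem_image_of_mem _ hq))
      · exact hys (adj μ φ q.1)
          (Finset.mem_insert_of_mem (Finset.mem_insert_of_mem (Finset.mem_image_of_mem _ hq)))
  refine ⟨fun i => (xy i).1, fun j => (xy j).2, fun i => (hP i).1, fun j => (hP j).2.1, ?_, ?_⟩
  · intro i j hij
    rcases hij.lt_or_eq with hij | rfl
    · exact (hr i j hij).2.trans (hP i).2.2.1
    · exact (hP i).2.2.2.2.trans (hP i).2.2.1
  · intro i j hji
    exact (hr j i hji).1.trans (hP j).2.2.2.1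

end Bilinear

section Rescaling

variable {𝕜 X Y Z : Type*} [NontriviallyNormedField 𝕜] [NormedAddCommGroup X] [NormedSpace 𝕜 X]
  [NormedAddCommGroup Y] [NormedSpace 𝕜 Y] [NormedAddCommGroup Z] [NormedSpace 𝕜 Z]

theorem exists_ne_zero_norm_smul_lt_one (x : X) : ∃ c : 𝕜, c ≠ 0 ∧ ‖c • x‖ < 1 := by
  obtain ⟨c, hc0, hc⟩ := NormedField.exists_norm_lt 𝕜 (inv_pos.2 (add_pos_of_nonneg_of_pos
    (norm_nonneg x) one_pos))
  refine ⟨c, norm_pos_iff.1 hc0, ?_⟩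
  rw [norm_smul]
  calc ‖c‖ * ‖x‖ ≤ (‖x‖ + 1)⁻¹ * ‖x‖ := by gcongr
    _ < 1 := by rw [inv_mul_lt_one₀ (by positivity)]; linarith

theorem ext_of_forall_norm_lt_one {f g : X →L[𝕜] Y →L[𝕜] Z}
    (h : ∀ x y, ‖x‖ < 1 → ‖y‖ < 1 → f x y = g x y) : f = g := by
  ext x y
  obtain ⟨c, hc0, hc⟩ := exists_ne_zero_norm_smul_lt_one (𝕜 := 𝕜) x
  obtain ⟨d, hd0, hd⟩ := exists_ne_zero_norm_smul_lt_one (𝕜 := 𝕜) y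
  have := h _ _ hc hd
  simp only [map_smul, FunLike.coe_smul, Pi.smul_apply] at this
  exact smul_right_injective Z hc0 (smul_right_injective Z hd0 this)

end Rescaling

section Regularity

variable {A B : Type*} [NonUnitalNormedRing A] [NormedSpace ℂ A] [IsScalarTower ℂ A A]
  [SMulCommClass ℂ A A] [NonUnitalNormedRing B] [NormedSpace ℂ B]

theorem fstArens_eq_sndArens_of_norm_lt_one (hreg : ProjArensRegular B A) {e : B} (he : ‖e‖ ≤ 1)
    {ev : Dual ℂ B} (hev : ev (e * e) = 1) {F G : Dual ℂ (Dual ℂ A)} (hF : ‖F‖ < 1)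
    (hG : ‖G‖ < 1) : fstArens A F G = sndArens A F G := by
  ext φ
  obtain ⟨x, y, hx, hy, hle, hlt⟩ := exists_seq_apply_eq_ext3 (mulCLM A) hF hG φ
  have hm : ∀ i j, ev.smulRight φ (e * e) (x i * y j) = φ (x i * y j) := fun i j => by
    simp [hev]
  refine hreg (ev.smulRight φ) (fun _ => e) (fun _ => e) x y (fun _ => he) (fun _ => he) hx hy
    _ _ _ _ (fun i => tendsto_const_nhds.congr' ?_) tendsto_const_nhds
    (fun j => tendsto_const_nhds.congr' ?_) tendsto_const_nhds
  · filter_upwards [eventually_ge_atTop i] with j hij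
    rw [hm]
    exact (hle i j hij).symm
  · filter_upwards [eventually_gt_atTop j] with i hji
    rw [hm]
    exact (hlt i j hji).symm

theorem arensRegular_of_projArensRegular (hreg : ProjArensRegular B A) {e : B} (he : ‖e‖ ≤ 1)
    {ev : Dual ℂ B} (hev : ev (e * e) = 1) : ArensRegular A := by
  have : ext3 (mulCLM A) = (ext3 (mulCLM A).flip).flip := ext_of_forall_norm_lt_one
    fun F G hF hG => fstArens_eq_sndArens_of_norm_lt_one hreg he hev hF hG
  exact fun F G => congr($this F G)

end Regularity

section IteratedLimits

variable {ι X Y Z : Type*} [NormedAddCommGroup X] [NormedSpace ℂ X]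
  [NormedAddCommGroup Y] [NormedSpace ℂ Y] [NormedAddCommGroup Z] [NormedSpace ℂ Z]

theorem exists_wStarTendsto (𝒰 : Ultrafilter ι) {x : ι → X} {C : ℝ} (hx : ∀ i, ‖x i‖ ≤ C) :
    ∃ F : Dual ℂ (Dual ℂ X), WStarTendsto x 𝒰 F := by
  let x' : ι → WeakDual ℂ (Dual ℂ X) := fun i => inclusionInDoubleDual ℂ X (x i)
  have hball :
      ↑(𝒰.map x') ≤ 𝓟 (WeakDual.toStrongDual ⁻¹' closedBall (0 : Dual ℂ (Dual ℂ X)) C) := by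
    rw [Ultrafilter.coe_map, le_principal_iff]
    exact Filter.mem_map.2 <| Filter.univ_mem' fun i =>
      mem_closedBall_zero_iff.2 ((double_dual_bound ℂ X (x i)).trans (hx i))
  obtain ⟨F, -, hF⟩ := (WeakDual.isCompact_closedBall 0 C).ultrafilter_le_nhds _ hball
  exact ⟨WeakDual.toStrongDual F, fun f => ((WeakDual.eval_continuous f).tendsto F).comp hF⟩

theorem tendsto_apply_of_tendsto {l : Filter ι} {Φ : ι → Dual ℂ X} {Φ₀ : Dual ℂ X}
    (hΦ : Tendsto Φ l (𝓝 Φ₀)) {w : ι → X} {C : ℝ} (hw : ∀ i, ‖w i‖ ≤ C) {L : ℂ}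
    (hL : Tendsto (fun i => Φ i (w i)) l (𝓝 L)) : Tendsto (fun i => Φ₀ (w i)) l (𝓝 L) := by
  have hbound : Tendsto (fun i => ‖Φ i - Φ₀‖ * C) l (𝓝 0) := by
    simpa using (tendsto_iff_norm_sub_tendsto_zero.1 hΦ).mul_const C
  have hdiff : Tendsto (fun i => Φ i (w i) - Φ₀ (w i)) l (𝓝 0) :=
    squeeze_zero_norm (fun i => by
      rw [← sub_apply]
      exact ((Φ i - Φ₀).le_opNorm _).trans (by gcongr; exact hw i)) hbound
  simpa using hL.sub hdiff

theorem eq_ext3_of_tendsto (μ : X →L[ℂ] Y →L[ℂ] Z) {x : ℕ → X} {y : ℕ → Y}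
    (hx : ∀ i, ‖x i‖ ≤ 1) (hy : ∀ j, ‖y j‖ ≤ 1) {𝒰 : Ultrafilter ℕ} (h𝒰 : (𝒰 : Filter ℕ) ≤ atTop)
    {F : Dual ℂ (Dual ℂ X)} {G : Dual ℂ (Dual ℂ Y)} (hF : WStarTendsto x 𝒰 F)
    (hG : WStarTendsto y 𝒰 G) {Φ : ℕ → ℕ → Dual ℂ Z} {Φ₁ : ℕ → Dual ℂ Z} {φ : Dual ℂ Z}
    (hΦ : ∀ i, Tendsto (Φ i) atTop (𝓝 (Φ₁ i))) (hΦ₁ : Tendsto Φ₁ atTop (𝓝 φ)) {g : ℕ → ℂ}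
    {L : ℂ} (hg : ∀ i, Tendsto (fun j => Φ i j (μ (x i) (y j))) atTop (𝓝 (g i)))
    (hL : Tendsto g atTop (𝓝 L)) : L = ext3 μ F G φ := by
  have hμ : ∀ i j, ‖μ (x i) (y j)‖ ≤ ‖μ‖ := fun i j =>
    (μ.le_opNorm₂ _ _).trans <| by
      simpa using mul_le_mul (mul_le_of_le_one_right (norm_nonneg μ) (hx i)) (hy j)
        (norm_nonneg _) (norm_nonneg μ)
  have hg_eq : ∀ i, g i = adj (adj μ) G (Φ₁ i) (x i) := fun i =>
    tendsto_nhds_unique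
      ((tendsto_apply_of_tendsto (hΦ i) (hμ i) (hg i)).mono_left h𝒰) (hG _)
  have hlim : Tendsto (fun i => adj (adj μ) G φ (x i)) atTop (𝓝 L) :=
    tendsto_apply_of_tendsto (((adj (adj μ) G).continuous.tendsto φ).comp hΦ₁) hx
      (hL.congr hg_eq)
  exact tendsto_nhds_unique (hlim.mono_left h𝒰) (hF _)

end IteratedLimits

section lpSpace

variable {p : ℝ≥0∞} [Fact (1 ≤ p)]

theorem exists_subseq_tendsto_pi {u : ℕ → lp (fun _ : ℕ => ℂ) p} {C : ℝ} (hu : ∀ t, ‖u t‖ ≤ C) :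
    ∃ (k : ℕ → ℕ) (α : lp (fun _ : ℕ => ℂ) p), StrictMono k ∧
      Tendsto (fun t => ⇑(u (k t))) atTop (𝓝 ⇑α) := by
  have hp0 : p ≠ 0 := (zero_lt_one.trans_le Fact.out).ne'
  have hmem : ∀ t, ⇑(u t) ∈ Set.univ.pi fun _ : ℕ => closedBall (0 : ℂ) C := fun t n _ =>
    mem_closedBall_zero_iff.2 ((lp.norm_apply_le_norm hp0 (u t) n).trans (hu t))
  obtain ⟨α, -, k, hk, hα⟩ :=
    (isCompact_univ_pi fun _ => isCompact_closedBall (0 : ℂ) C).tendsto_subseq hmem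
  have hbdd : Bornology.IsBounded (Set.range (u ∘ k)) :=
    isBounded_iff_forall_norm_le.2 ⟨C, Set.forall_mem_range.2 fun t => hu (k t)⟩
  exact ⟨k, ⟨α, lp.memℓp_of_tendsto hbdd hα⟩, hk, hα⟩

variable [hp : Fact (p ≠ ∞)]

local instance : NonUnitalNormedRing (lp (fun _ : ℕ => ℂ) p) := lpNonUnitalNormedRing p hp.out

theorem lp_mul_comm (f g : lp (fun _ : ℕ => ℂ) p) : f * g = g * f :=
  lp.ext (mul_comm (⇑f) ⇑g)

theorem tendsto_mul_of_tendsto_pi {ι : Type*} {l : Filter ι} {u : ι → lp (fun _ : ℕ => ℂ) p}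
    {C : ℝ} (hu : ∀ t, ‖u t‖ ≤ C) {α : lp (fun _ : ℕ => ℂ) p}
    (hα : Tendsto (fun t => ⇑(u t)) l (𝓝 ⇑α)) (y : lp (fun _ : ℕ => ℂ) p) :
    Tendsto (fun t => u t * y) l (𝓝 (α * y)) := by
  have hp0 : p ≠ 0 := (zero_lt_one.trans_le Fact.out).ne'
  have hpt : 0 < p.toReal := ENNReal.toReal_pos hp0 hp.out
  set D := |C| + ‖α‖
  have hcoord : ∀ t n, (u t * y - α * y) n = (u t n - α n) * y n := fun t n =>
    (sub_mul (u t n) (α n) (y n)).symm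
  have hsum : Tendsto (fun t => ‖u t * y - α * y‖ ^ p.toReal) l (𝓝 0) := by
    simp_rw [lp.norm_rpow_eq_tsum hpt, hcoord]
    rw [← tsum_zero]
    refine tendsto_tsum_of_dominated_convergence
      (((lp.memℓp y).summable hpt).mul_left (D ^ p.toReal)) (fun n => ?_)
      (Filter.Eventually.of_forall fun t n => ?_)
    · have : Tendsto (fun t => u t n - α n) l (𝓝 0) := by
        simpa using (tendsto_pi_nhds.1 hα n).sub_const (α n)
      simpa [Real.zero_rpow hpt.ne'] using
        ((this.mul_const (y n)).norm.rpow_const (Or.inr hpt.le))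
    · have hle : ‖(u t n - α n) * y n‖ ≤ D * ‖y n‖ := by
        rw [norm_mul]
        gcongr
        calc ‖u t n - α n‖ ≤ ‖u t n‖ + ‖α n‖ := norm_sub_le _ _
          _ ≤ |C| + ‖α‖ := add_le_add
            ((lp.norm_apply_le_norm hp0 _ n).trans ((hu t).trans (le_abs_self C)))
            (lp.norm_apply_le_norm hp0 α n)
      rw [Real.norm_of_nonneg (by positivity), ← Real.mul_rpow (by positivity) (norm_nonneg _)]
      gcongr
  rw [tendsto_iff_norm_sub_tendsto_zero]
  simpa [← Real.rpow_mul (norm_nonneg _), mul_inv_cancel₀ hpt.ne',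
    Real.zero_rpow (inv_ne_zero hpt.ne')] using
    hsum.rpow_const (p := p.toReal⁻¹) (Or.inr (by positivity))

theorem projArensRegular_of_arensRegular {A : Type*} [NonUnitalNormedRing A] [NormedSpace ℂ A]
    [IsScalarTower ℂ A A] [SMulCommClass ℂ A A] (hA : ArensRegular A) :
    ProjArensRegular (lp (fun _ : ℕ => ℂ) p) A := by
  intro m a a' b b' ha ha' hb hb' g h L L' hg hgL hh hhL'
  obtain ⟨k, α, hk, hα⟩ := exists_subseq_tendsto_pi ha
  obtain ⟨k', β, hk', hβ⟩ := exists_subseq_tendsto_pi ha'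
  obtain ⟨𝒰, h𝒰⟩ := Ultrafilter.exists_le (atTop : Filter ℕ)
  obtain ⟨F, hF⟩ := exists_wStarTendsto 𝒰 fun i => hb (k i)
  obtain ⟨G, hG⟩ := exists_wStarTendsto 𝒰 fun j => hb' (k' j)
  have hmul : ∀ x, Tendsto (fun i => m (a (k i) * x)) atTop (𝓝 (m (α * x))) := fun x =>
    (m.continuous.tendsto _).comp (tendsto_mul_of_tendsto_pi (fun i => ha (k i)) hα x)
  have hmul' : ∀ x, Tendsto (fun j => m (x * a' (k' j))) atTop (𝓝 (m (x * β))) := fun x => by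
    simp_rw [lp_mul_comm x]
    exact (m.continuous.tendsto _).comp (tendsto_mul_of_tendsto_pi (fun j => ha' (k' j)) hβ x)
  have hL : L = fstArens A F G (m (α * β)) :=
    eq_ext3_of_tendsto (mulCLM A) (fun i => hb (k i)) (fun j => hb' (k' j)) h𝒰 hF hG
      (fun i => hmul' (a (k i))) (hmul β) (fun i => (hg (k i)).comp hk'.tendsto_atTop)
      (hgL.comp hk.tendsto_atTop)
  have hL' : L' = sndArens A F G (m (α * β)) :=
    eq_ext3_of_tendsto (mulCLM A).flip (fun j => hb' (k' j)) (fun i => hb (k i)) h𝒰 hG hF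
      (fun j => hmul (a' (k' j))) (hmul' α) (fun j => (hh (k' j)).comp hk.tendsto_atTop)
      (hhL'.comp hk'.tendsto_atTop)
  rw [hL, hL', hA]

end lpSpace

end Arens

theorem lp_projTensor_arensRegular_iff_general
    {A : Type*} [NonUnitalNormedRing A] [NormedSpace ℂ A]
    [IsScalarTower ℂ A A] [SMulCommClass ℂ A A]
    (p : ENNReal) (hp1 : 1 < p) (hp2 : p ≠ ∞) :
    haveI : Fact (1 ≤ p) := ⟨hp1.le⟩
    letI : NonUnitalNormedRing (lp (fun _ : ℕ => ℂ) p) :=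
      Arens.lpNonUnitalNormedRing p hp2
    (Arens.ProjArensRegular (lp (fun _ : ℕ => ℂ) p) A ↔ Arens.ArensRegular A) := by
  have : Fact (1 ≤ p) := ⟨hp1.le⟩
  have : Fact (p ≠ ∞) := ⟨hp2⟩
  let _ := Arens.lpNonUnitalNormedRing p hp2
  refine ⟨fun hreg => Arens.arensRegular_of_projArensRegular hreg (e := lp.single p 0 1)
    (ev := lp.evalCLM ℂ (fun _ => ℂ) p 0) ?_ ?_, Arens.projArensRegular_of_arensRegular⟩
  · rw [lp.norm_single (zero_lt_one.trans hp1), norm_one]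
  · exact (one_mul _).trans (lp.single_apply_self p 0 1)

/-- **Example 2-9 (1).** For `1 < p < ∞`, the projective tensor product `ℓᵖ ⊗̂ A`
(with `ℓᵖ` carrying pointwise multiplication) is Arens regular if and only if `A` is
Arens regular. -/
theorem lp_projTensor_arensRegular_iff
    {A : Type*} [NonUnitalNormedRing A] [NormedSpace ℂ A]
    [IsScalarTower ℂ A A] [SMulCommClass ℂ A A] [CompleteSpace A]
    (p : ENNReal) (hp1 : 1 < p) (hp2 : p ≠ ∞) :
    haveI : Fact (1 ≤ p) := ⟨hp1.le⟩
    letI : NonUnitalNormedRing (lp (fun _ : ℕ => ℂ) p) :=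
      Arens.lpNonUnitalNormedRing p hp2
    (Arens.ProjArensRegular (lp (fun _ : ℕ => ℂ) p) A ↔ Arens.ArensRegular A) :=
  lp_projTensor_arensRegular_iff_general p hp1 hp2
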